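/- For every integer n ≥ 1, for every real inner product space and every family of vectors (V_w): ⟨|S|, J^{⋆n}⟩ = ⟨id, J^{⋆n}⟩, where J^{⋆n} is the n-fold convolution power of J = id − ν, |S| is the reversal endomorphism, and the inner product is taken over the words of length n (the grade equals the convolution power). -/

import Mathlib

/-!
On a word `v` of length `n`, every term of `J^{⋆n}(v)` vanishes except the one cutting `v` into its
`n` letters, so `J^{⋆n}(v) = v₁ ⧢ ⋯ ⧢ vₙ`, which is invariant under reversal. Reversal is a
morphism for the shuffle product, and `Ē` is reversal invariant (the reverse of an admissible word
is admissible, with the same letter counts). Hence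
`Ē(rev u ⧢ J^{⋆n} v) = Ē(rev (rev u ⧢ J^{⋆n} v)) = Ē(u ⧢ J^{⋆n} v)` termwise.
-/

open Finsupp

/-- Words over the alphabet `A = {0,1,…,d}`. -/
abbrev Word (d : ℕ) : Type := List (Fin (d+1))

/-- The free real vector space with basis the set of all words. -/
abbrev KA (d : ℕ) : Type := Word d →₀ ℝ

/-- Shuffle product of two words, as an element of `KA d`. -/
noncomputable def shuffleWord (d : ℕ) : Word d → Word d → KA d
  | [], v => Finsupp.single v 1
  | a :: u, [] => Finsupp.single (a :: u) 1
  | a :: u, b :: v =>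
      Finsupp.mapDomain (List.cons a) (shuffleWord d u (b :: v)) +
      Finsupp.mapDomain (List.cons b) (shuffleWord d (a :: u) v)
  termination_by u v => u.length + v.length

/-- Bilinear extension of the shuffle product to `KA d`. -/
noncomputable def sh (d : ℕ) (x y : KA d) : KA d :=
  x.sum fun u cu => y.sum fun v cv => (cu * cv) • shuffleWord d u v

/-- Admissible words: concatenations of blocks each of which is the single
letter `0` or a pair `aa` with `a ≠ 0`. -/
inductive Admissible (d : ℕ) : Word d → Prop
  | nil : Admissible d []
  | zero {w : Word d} : Admissible d w → Admissible d (0 :: w)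
  | pair {w : Word d} (a : Fin (d+1)) : a ≠ 0 → Admissible d w →
      Admissible d (a :: a :: w)

/-- Number of `0` letters. -/
def zc (d : ℕ) (w : Word d) : ℕ := w.count 0

/-- Half the number of nonzero letters. -/
def dc (d : ℕ) (w : Word d) : ℕ := (w.length - w.count 0) / 2

def nc (d : ℕ) (w : Word d) : ℕ := zc d w + dc d w

open Classical in
/-- The expectation map on words. -/
noncomputable def Ebar (d : ℕ) (t : ℝ) (w : Word d) : ℝ :=
  if Admissible d w then t ^ nc d w / (2 ^ dc d w * Nat.factorial (nc d w)) else 0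

/-- Linear extension of the expectation map to `KA d`. -/
noncomputable def EbarL (d : ℕ) (t : ℝ) (x : KA d) : ℝ :=
  x.sum fun w c => c * Ebar d t w

/-- The linear endomorphism of `KA d` determined by values on basis words. -/
noncomputable def wordLift (d : ℕ) (f : Word d → KA d) : KA d →ₗ[ℝ] KA d :=
  Finsupp.lsum ℝ fun w => LinearMap.toSpanSingleton ℝ (KA d) (f w)

/-- The identity endomorphism `id`. -/
noncomputable def idE (d : ℕ) : KA d →ₗ[ℝ] KA d := LinearMap.id

/-- The reversal endomorphism `|S|`. -/
noncomputable def revE (d : ℕ) : KA d →ₗ[ℝ] KA d :=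
  wordLift d fun w => Finsupp.single w.reverse 1

/-- The antipode `S`. -/
noncomputable def Sa (d : ℕ) : KA d →ₗ[ℝ] KA d :=
  wordLift d fun w => Finsupp.single w.reverse ((-1 : ℝ) ^ w.length)

/-- The convolution unit `ν`. -/
noncomputable def nuE (d : ℕ) : KA d →ₗ[ℝ] KA d :=
  wordLift d fun w => if w = [] then Finsupp.single ([] : Word d) 1 else 0

/-- The expectation endomorphism `E`. -/
noncomputable def EE (d : ℕ) (t : ℝ) : KA d →ₗ[ℝ] KA d :=
  wordLift d fun w => Finsupp.single ([] : Word d) (Ebar d t w)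

/-- The convolution product `X ⋆ Y`. -/
noncomputable def conv (d : ℕ) (X Y : KA d →ₗ[ℝ] KA d) : KA d →ₗ[ℝ] KA d :=
  wordLift d fun w => ∑ k ∈ Finset.range (w.length + 1),
    sh d (X (Finsupp.single (w.take k) 1)) (Y (Finsupp.single (w.drop k) 1))

/-- Convolution powers, `X^{⋆0} = ν`. -/
noncomputable def convPow (d : ℕ) (X : KA d →ₗ[ℝ] KA d) : ℕ → (KA d →ₗ[ℝ] KA d)
  | 0 => nuE d
  | k + 1 => conv d X (convPow d X k)

/-- The inner product `⟨X,Y⟩` of endomorphisms, taken over the words of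
length `n`, relative to the family of vectors `Vf`. -/
noncomputable def ip (d : ℕ) (t : ℝ) {H : Type*} [NormedAddCommGroup H]
    [InnerProductSpace ℝ H] (Vf : Word d → H) (n : ℕ)
    (X Y : KA d →ₗ[ℝ] KA d) : ℝ :=
  ∑ u : Fin n → Fin (d+1), ∑ v : Fin n → Fin (d+1),
    EbarL d t (sh d (X (Finsupp.single (List.ofFn u) 1))
                    (Y (Finsupp.single (List.ofFn v) 1))) *
      (inner ℝ (Vf (List.ofFn u)) (Vf (List.ofFn v)) : ℝ)

/-- Positive semidefiniteness of the expectation Gram matrix at grade `n`: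
indexed by the words of length `n` together with the empty word. -/
def gramPSD (d n : ℕ) (t : ℝ) : Prop :=
  ∀ c : Option (Fin n → Fin (d+1)) → ℝ,
    0 ≤ ∑ x : Option (Fin n → Fin (d+1)), ∑ y : Option (Fin n → Fin (d+1)),
      c x * c y *
        EbarL d t (shuffleWord d (x.elim ([] : Word d) List.ofFn)
                                 (y.elim ([] : Word d) List.ofFn))


section Shuffle

variable {d : ℕ}

lemma shuffleWord_nil_left (v : Word d) : shuffleWord d [] v = single v 1 := by
  rw [shuffleWord]

lemma shuffleWord_nil_right (u : Word d) : shuffleWord d u [] = single u 1 := by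
  cases u <;> rw [shuffleWord]

lemma shuffleWord_cons_cons (a b : Fin (d+1)) (u v : Word d) :
    shuffleWord d (a :: u) (b :: v) =
      mapDomain (List.cons a) (shuffleWord d u (b :: v)) +
      mapDomain (List.cons b) (shuffleWord d (a :: u) v) := by
  rw [shuffleWord]

lemma shuffleWord_append_singleton (a b : Fin (d+1)) (u v : Word d) :
    shuffleWord d (u ++ [a]) (v ++ [b]) =
      mapDomain (· ++ [a]) (shuffleWord d u (v ++ [b])) +
      mapDomain (· ++ [b]) (shuffleWord d (u ++ [a]) v) := by
  induction u generalizing v with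
  | nil =>
    induction v with
    | nil =>
      simp [shuffleWord_cons_cons, shuffleWord_nil_left, shuffleWord_nil_right, mapDomain_single,
        add_comm]
    | cons c v ih =>
      simp only [List.nil_append, List.cons_append] at ih ⊢
      rw [shuffleWord_cons_cons, ih, shuffleWord_cons_cons a c [] v]
      simp only [shuffleWord_nil_left, mapDomain_add, mapDomain_single, ← mapDomain_comp,
        Function.comp_def, List.cons_append]
      abel
  | cons c u ihu =>
    induction v with
    | nil =>
      have h := ihu []
      simp only [List.nil_append, List.cons_append] at h ⊢
      rw [shuffleWord_cons_cons, h, shuffleWord_cons_cons c b u []]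
      simp only [shuffleWord_nil_right, mapDomain_add, mapDomain_single, ← mapDomain_comp,
        Function.comp_def, List.cons_append]
      abel
    | cons e v ihv =>
      have h := ihu (e :: v)
      simp only [List.cons_append] at h ihv ⊢
      rw [shuffleWord_cons_cons, h, ihv, shuffleWord_cons_cons c e u (v ++ [b]),
        shuffleWord_cons_cons c e (u ++ [a]) v]
      simp only [mapDomain_add, ← mapDomain_comp, Function.comp_def, List.cons_append]
      abel

lemma mapDomain_reverse_shuffleWord (u v : Word d) :
    mapDomain List.reverse (shuffleWord d u v) = shuffleWord d u.reverse v.reverse := by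
  induction u generalizing v with
  | nil => simp [shuffleWord_nil_left, mapDomain_single]
  | cons a u ihu =>
    induction v with
    | nil => simp [shuffleWord_nil_right, mapDomain_single]
    | cons b v ihv =>
      have hcons (c : Fin (d+1)) :
          (List.reverse ∘ List.cons c : Word d → Word d) = (· ++ [c]) ∘ List.reverse := by
        funext l; simp
      rw [shuffleWord_cons_cons, mapDomain_add, ← mapDomain_comp, ← mapDomain_comp, hcons,
        hcons, mapDomain_comp, mapDomain_comp, ihu, ihv, List.reverse_cons, List.reverse_cons,
        shuffleWord_append_singleton, ← List.reverse_cons, ← List.reverse_cons]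

lemma sh_single_one_left (w : Word d) (y : KA d) :
    sh d (single w 1) y = y.sum fun v c => c • shuffleWord d w v := by
  simp [sh, sum_single_index]

lemma sh_zero_left (y : KA d) : sh d 0 y = 0 := by
  simp [sh]

lemma sh_zero_right (x : KA d) : sh d x 0 = 0 := by
  simp [sh]

lemma mapDomain_reverse_sh_single_one_left (w : Word d) (y : KA d) :
    mapDomain List.reverse (sh d (single w 1) y)
      = sh d (single w.reverse 1) (mapDomain List.reverse y) := by
  rw [sh_single_one_left, sh_single_one_left, mapDomain_sum,
    sum_mapDomain_index (by simp) (fun _ _ _ => add_smul _ _ _)]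
  exact sum_congr fun v _ => by rw [mapDomain_smul, mapDomain_reverse_shuffleWord]

noncomputable def shuffleLetters (d : ℕ) : Word d → KA d
  | [] => single [] 1
  | a :: w => sh d (single [a] 1) (shuffleLetters d w)

lemma mapDomain_reverse_shuffleLetters (w : Word d) :
    mapDomain List.reverse (shuffleLetters d w) = shuffleLetters d w := by
  induction w with
  | nil => simp [shuffleLetters, mapDomain_single]
  | cons a w ih => rw [shuffleLetters, mapDomain_reverse_sh_single_one_left, ih]; rfl

end Shuffle

section Convolution

variable {d : ℕ}

lemma wordLift_single (f : Word d → KA d) (w : Word d) :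
    wordLift d f (single w 1) = f w := by
  rw [wordLift, lsum_single, LinearMap.toSpanSingleton_apply, one_smul]

lemma sub_nuE_single_nil : (idE d - nuE d) (single [] 1) = 0 := by
  simp [idE, nuE, wordLift_single]

lemma sub_nuE_single_of_ne_nil {w : Word d} (hw : w ≠ []) :
    (idE d - nuE d) (single w 1) = single w 1 := by
  simp [idE, nuE, wordLift_single, hw]

lemma convPow_sub_nuE_single_of_length_lt {k : ℕ} {w : Word d} (hw : w.length < k) :
    convPow d (idE d - nuE d) k (single w 1) = 0 := by
  induction k generalizing w with
  | zero => omega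
  | succ k ih =>
    rw [convPow, conv, wordLift_single]
    -- `J` kills the empty prefix, and every other split leaves a suffix shorter than `k`.
    refine Finset.sum_eq_zero fun j hj => ?_
    rcases j with _ | j
    · rw [List.take_zero, sub_nuE_single_nil, sh_zero_left]
    · rw [ih (by simp at hj ⊢; omega), sh_zero_right]

lemma convPow_sub_nuE_single_of_length_eq {k : ℕ} {w : Word d} (hw : w.length = k) :
    convPow d (idE d - nuE d) k (single w 1) = shuffleLetters d w := by
  induction k generalizing w with
  | zero =>
    rw [List.length_eq_zero_iff.mp hw]
    simp [convPow, nuE, wordLift_single, shuffleLetters]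
  | succ k ih =>
    obtain ⟨a, w, rfl⟩ := List.exists_cons_of_length_eq_add_one hw
    rw [convPow, conv, wordLift_single, Finset.sum_eq_single 1]
    · simp only [List.take_succ_cons, List.take_zero, List.drop_succ_cons, List.drop_zero]
      rw [sub_nuE_single_of_ne_nil (List.cons_ne_nil _ _), ih (Nat.succ_injective hw),
        shuffleLetters]
    · rintro (_ | _ | j) hj hj1
      · rw [List.take_zero, sub_nuE_single_nil, sh_zero_left]
      · exact absurd rfl hj1
      · rw [convPow_sub_nuE_single_of_length_lt (by simp at hw hj ⊢; omega), sh_zero_right]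
    · simp

end Convolution

section Expectation

variable {d : ℕ}

lemma Admissible.append {u v : Word d} (hu : Admissible d u) (hv : Admissible d v) :
    Admissible d (u ++ v) := by
  induction hu with
  | nil => exact hv
  | zero _ ih => exact .zero ih
  | pair a ha _ ih => exact .pair a ha ih

lemma Admissible.reverse {w : Word d} (hw : Admissible d w) : Admissible d w.reverse := by
  induction hw with
  | nil => exact .nil
  | zero _ ih => rw [List.reverse_cons]; exact ih.append (.zero .nil)
  | pair a ha _ ih =>
    rw [List.reverse_cons, List.reverse_cons, List.append_assoc]
    exact ih.append (.pair a ha .nil)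

lemma admissible_reverse_iff {w : Word d} : Admissible d w.reverse ↔ Admissible d w :=
  ⟨fun h => by simpa using h.reverse, Admissible.reverse⟩

lemma Ebar_reverse (t : ℝ) (w : Word d) : Ebar d t w.reverse = Ebar d t w := by
  rw [Ebar, Ebar, nc, nc, dc, dc, zc, zc, List.count_reverse, List.length_reverse]
  classical
  exact if_congr admissible_reverse_iff rfl rfl

lemma EbarL_mapDomain_reverse (t : ℝ) (x : KA d) :
    EbarL d t (mapDomain List.reverse x) = EbarL d t x := by
  rw [EbarL, sum_mapDomain_index (by simp) (fun _ _ _ => add_mul _ _ _)]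
  exact sum_congr fun w _ => by rw [Ebar_reverse]

lemma EbarL_sh_reverse_shuffleLetters (t : ℝ) (u w : Word d) :
    EbarL d t (sh d (single u.reverse 1) (shuffleLetters d w))
      = EbarL d t (sh d (single u 1) (shuffleLetters d w)) := by
  rw [← EbarL_mapDomain_reverse, mapDomain_reverse_sh_single_one_left, List.reverse_reverse,
    mapDomain_reverse_shuffleLetters]

end Expectation

theorem stmt_16_general (d n : ℕ) (t : ℝ)
    {H : Type*} [NormedAddCommGroup H] [InnerProductSpace ℝ H]
    (Vf : Word d → H) :
    ip d t Vf n (revE d) (convPow d (idE d - nuE d) n)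
      = ip d t Vf n (idE d) (convPow d (idE d - nuE d) n) := by
  refine Finset.sum_congr rfl fun u _ => Finset.sum_congr rfl fun v _ => ?_
  rw [revE, wordLift_single, convPow_sub_nuE_single_of_length_eq List.length_ofFn, idE,
    LinearMap.id_apply, EbarL_sh_reverse_shuffleLetters]

theorem stmt_16 (d n : ℕ) (hd : 1 ≤ d) (hn : 1 ≤ n) (t : ℝ) (ht : 0 < t)
    {H : Type*} [NormedAddCommGroup H] [InnerProductSpace ℝ H]
    (Vf : Word d → H) :
    ip d t Vf n (revE d) (convPow d (idE d - nuE d) n)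
      = ip d t Vf n (idE d) (convPow d (idE d - nuE d) n) :=
  stmt_16_general d n t Vf
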